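/- arXiv:1610.08457 — 3 statements merged into one kernel-verified Lean document; each statement's English description precedes it below -/
import Mathlib

section
/- Let f : X → Y be a morphism in C_I(P) between minimal projective complexes. If there exists t > 0 such that X^j = 0 for all j < -t, X^1 ≠ 0, Y^{-(t+1)} ≠ 0, and Y^1 = 0, then f is not irreducible. -/
/-!
Splice `f` at degree `0`: the complex `Z` that agrees with `X` in negative degrees and with `Y`
in non-negative degrees, joined by the differential `d_X ≫ f`, is again minimal projective, and
`f` factors as `X ⟶ Z ⟶ Y` with components `(𝟙, f)` and `(f, 𝟙)`. Since `Z¹ = Y¹ = 0` but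
`X¹ ≠ 0`, the first factor is not a split monomorphism; since `Z^{-(t+1)} = X^{-(t+1)} = 0` but
`Y^{-(t+1)} ≠ 0`, the second is not a split epimorphism.
-/

open CategoryTheory CategoryTheory.Limits

namespace ARShapes

variable {Λ : Type} [Ring Λ]

/-- Cochain complexes of (right) `Λ`-modules, i.e. `Λᵐᵒᵖ`-modules, indexed by `ℤ`. -/
abbrev Cplx (Λ : Type) [Ring Λ] : Type 1 := CochainComplex (ModuleCat Λᵐᵒᵖ) ℤ

/-- A minimal projective complex: a complex of finitely generated projective right
`Λ`-modules whose differentials have image contained in the radical of the target. -/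
def IsMinimalProjective (X : Cplx Λ) : Prop :=
  (∀ i : ℤ, Module.Finite Λᵐᵒᵖ (X.X i)) ∧ (∀ i : ℤ, Module.Projective Λᵐᵒᵖ (X.X i)) ∧
    (∀ i : ℤ, LinearMap.range (X.d i (i + 1)).hom ≤
      (Ideal.jacobson (⊥ : Ideal Λᵐᵒᵖ)) • (⊤ : Submodule Λᵐᵒᵖ (X.X (i + 1))))

/-- Irreducibility of a morphism in the category `P` of finitely generated projective
right `Λ`-modules (a full subcategory of all modules). -/
def IrreducibleP {M N : ModuleCat Λᵐᵒᵖ} (φ : M ⟶ N) : Prop :=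
  ¬ IsSplitMono φ ∧ ¬ IsSplitEpi φ ∧
    ∀ (Z : ModuleCat Λᵐᵒᵖ), Module.Finite Λᵐᵒᵖ Z → Module.Projective Λᵐᵒᵖ Z →
      ∀ (g : M ⟶ Z) (h : Z ⟶ N), φ = g ≫ h → IsSplitMono g ∨ IsSplitEpi h

/-- A chain map is smonic if all of its components are split monomorphisms. -/
def Smonic {X Y : Cplx Λ} (f : X ⟶ Y) : Prop := ∀ i : ℤ, IsSplitMono (f.f i)

/-- A chain map is sepic if all of its components are split epimorphisms. -/
def Sepic {X Y : Cplx Λ} (f : X ⟶ Y) : Prop := ∀ i : ℤ, IsSplitEpi (f.f i)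

/-- A chain map is sirreducible if there is exactly one index `i₀` where the component is
irreducible in the category of finitely generated projective modules, the components in lower
degrees being split epimorphisms and those in higher degrees split monomorphisms.  (Since an
irreducible morphism is neither a split monomorphism nor a split epimorphism, the uniqueness
of such an index is automatic.) -/
def Sirreducible {X Y : Cplx Λ} (f : X ⟶ Y) : Prop :=
  ∃ i₀ : ℤ, IrreducibleP (f.f i₀) ∧ (∀ i : ℤ, i < i₀ → IsSplitEpi (f.f i)) ∧
    (∀ i : ℤ, i₀ < i → IsSplitMono (f.f i))

/-- Irreducibility of a chain map in the category `C_I(P)` of minimal projective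
complexes (a full subcategory of all complexes). -/
def IrreducibleC {X Y : Cplx Λ} (f : X ⟶ Y) : Prop :=
  ¬ IsSplitMono f ∧ ¬ IsSplitEpi f ∧
    ∀ (Z : Cplx Λ), IsMinimalProjective Z →
      ∀ (g : X ⟶ Z) (h : Z ⟶ Y), f = g ≫ h → IsSplitMono g ∨ IsSplitEpi h

end ARShapes

namespace CochainComplex

variable {C : Type*} [Category C] [HasZeroMorphisms C] {X Y : CochainComplex C ℤ} (f : X ⟶ Y)

variable (X Y) in
def spliceX : ℤ → C
  | .ofNat n => Y.X (.ofNat n)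
  | .negSucc n => X.X (.negSucc n)

def spliceD : ∀ i j : ℤ, spliceX X Y i ⟶ spliceX X Y j
  | .ofNat i, .ofNat j => Y.d (.ofNat i) (.ofNat j)
  | .negSucc i, .negSucc j => X.d (.negSucc i) (.negSucc j)
  | .negSucc i, .ofNat j => X.d (.negSucc i) (.ofNat j) ≫ f.f (.ofNat j)
  | .ofNat _, .negSucc _ => 0

def splice : CochainComplex C ℤ where
  X := spliceX X Y
  d := spliceD f
  shape
  | .ofNat _, .ofNat _, h => Y.shape _ _ h
  | .negSucc _, .negSucc _, h => X.shape _ _ h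
  | .negSucc _, .ofNat _, h => by
    change X.d _ _ ≫ f.f _ = 0
    rw [X.shape _ _ h, zero_comp]
  | .ofNat _, .negSucc _, _ => rfl
  d_comp_d' i j k _ _ := by
    match i, j, k with
    | .ofNat _, .ofNat _, .ofNat _ => exact Y.d_comp_d _ _ _
    | .negSucc _, .negSucc _, .negSucc _ => exact X.d_comp_d _ _ _
    | .negSucc _, .negSucc _, .ofNat _ =>
      change X.d _ _ ≫ X.d _ _ ≫ f.f _ = 0
      rw [X.d_comp_d_assoc, zero_comp]
    | .negSucc _, .ofNat _, .ofNat _ =>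
      change (X.d _ _ ≫ f.f _) ≫ Y.d _ _ = 0
      rw [Category.assoc, f.comm, X.d_comp_d_assoc, zero_comp]
    | .ofNat _, .negSucc _, _ => exact zero_comp
    | _, .ofNat _, .negSucc _ => exact comp_zero

def toSplice : X ⟶ splice f where
  f
  | .ofNat n => f.f (.ofNat n)
  | .negSucc n => 𝟙 (X.X (.negSucc n))
  comm'
  | .ofNat _, _, rfl => f.comm _ _
  | .negSucc 0, _, rfl => Category.id_comp (X.d _ (.ofNat 0) ≫ f.f _)
  | .negSucc (_ + 1), _, rfl => (Category.id_comp _).trans (Category.comp_id _).symm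

def fromSplice : splice f ⟶ Y where
  f
  | .ofNat n => 𝟙 (Y.X (.ofNat n))
  | .negSucc n => f.f (.negSucc n)
  comm'
  | .ofNat _, _, rfl => (Category.id_comp _).trans (Category.comp_id _).symm
  | .negSucc 0, _, rfl => (f.comm _ (.ofNat 0)).trans (Category.comp_id _).symm
  | .negSucc (_ + 1), _, rfl => f.comm _ _

theorem splice_X_of_neg {i : ℤ} (hi : i < 0) : (splice f).X i = X.X i := by
  cases i with
  | ofNat n => exact absurd hi (Int.not_lt.mpr (Int.natCast_nonneg n))
  | negSucc n => rfl

theorem toSplice_comp_fromSplice : toSplice f ≫ fromSplice f = f := by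
  ext (n | n)
  · exact Category.comp_id (f.f _)
  · exact Category.id_comp (f.f _)

end CochainComplex

theorem LinearMap.range_comp_le_smul_top {R M N P : Type*} [Semiring R]
    [AddCommMonoid M] [AddCommMonoid N] [AddCommMonoid P] [Module R M] [Module R N] [Module R P]
    {I : Ideal R} (φ : M →ₗ[R] N) (ψ : N →ₗ[R] P) (hφ : LinearMap.range φ ≤ I • ⊤) :
    LinearMap.range (ψ ∘ₗ φ) ≤ I • ⊤ :=
  calc LinearMap.range (ψ ∘ₗ φ) = (LinearMap.range φ).map ψ := LinearMap.range_comp φ ψ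
    _ ≤ (I • ⊤ : Submodule R N).map ψ := Submodule.map_mono hφ
    _ = I • (⊤ : Submodule R N).map ψ := Submodule.map_smul'' I ⊤ ψ
    _ ≤ I • ⊤ := Submodule.smul_mono le_rfl le_top

namespace ARShapes

open CochainComplex

section

variable {Λ : Type} [Ring Λ]

theorem IsMinimalProjective.range_d_le {X : Cplx Λ} (hX : IsMinimalProjective X) (i j : ℤ) :
    LinearMap.range (X.d i j).hom ≤ (Ideal.jacobson (⊥ : Ideal Λᵐᵒᵖ)) • ⊤ := by
  by_cases hij : i + 1 = j
  · subst hij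
    exact hX.2.2 i
  · rw [X.shape i j hij, ModuleCat.hom_zero, LinearMap.range_zero]
    exact bot_le

theorem isMinimalProjective_splice {X Y : Cplx Λ} (hX : IsMinimalProjective X)
    (hY : IsMinimalProjective Y) (f : X ⟶ Y) : IsMinimalProjective (splice f) := by
  have range_d_le : ∀ i j : ℤ,
      LinearMap.range ((splice f).d i j).hom ≤ (Ideal.jacobson (⊥ : Ideal Λᵐᵒᵖ)) • ⊤
    | .ofNat _, .ofNat _ => hY.range_d_le _ _
    | .negSucc _, .negSucc _ => hX.range_d_le _ _
    | .negSucc _, .ofNat _ => LinearMap.range_comp_le_smul_top _ _ (hX.range_d_le _ _)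
    | .ofNat _, .negSucc _ => by
      rw [show (splice f).d _ _ = 0 from rfl, ModuleCat.hom_zero, LinearMap.range_zero]
      exact bot_le
  refine ⟨?_, ?_, fun i => range_d_le i (i + 1)⟩
  · rintro (n | n)
    exacts [hY.1 _, hX.1 _]
  · rintro (n | n)
    exacts [hY.2.1 _, hX.2.1 _]

end

theorem not_irreducible_general
    {Λ : Type} [Ring Λ]
    (X Y : Cplx Λ) (hX : IsMinimalProjective X) (hY : IsMinimalProjective Y)
    (f : X ⟶ Y) (t : ℤ) (ht : 0 < t)
    (h₁ : ∀ j : ℤ, j < -t → IsZero (X.X j))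
    (h₂ : ¬ IsZero (X.X 1))
    (h₃ : ¬ IsZero (Y.X (-(t + 1))))
    (h₄ : IsZero (Y.X 1)) :
    ¬ IrreducibleC f := by
  rintro ⟨-, -, hfactor⟩
  obtain hmono | hepi := hfactor _ (isMinimalProjective_splice hX hY f) _ _
    (toSplice_comp_fromSplice f).symm
  · exact h₂ (IsZero.of_mono ((toSplice f).f 1) h₄)
  · have hZ : IsZero ((splice f).X (-(t + 1))) := by
      rw [splice_X_of_neg f (by omega)]
      exact h₁ _ (by omega)
    exact h₃ (IsZero.of_epi ((fromSplice f).f _) hZ)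

/-- If `X` vanishes in degrees `< -t` (for some `t > 0`), `X^1 ≠ 0`,
`Y^{-(t+1)} ≠ 0` and `Y^1 = 0`, then no morphism `f : X ⟶ Y` is irreducible in `C_I(P)`. -/
theorem not_irreducible
    {k Λ : Type} [Field k] [Ring Λ] [Algebra k Λ] [FiniteDimensional k Λ]
    (X Y : Cplx Λ) (hX : IsMinimalProjective X) (hY : IsMinimalProjective Y)
    (f : X ⟶ Y) (t : ℤ) (ht : 0 < t)
    (h₁ : ∀ j : ℤ, j < -t → IsZero (X.X j))
    (h₂ : ¬ IsZero (X.X 1))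
    (h₃ : ¬ IsZero (Y.X (-(t + 1))))
    (h₄ : IsZero (Y.X 1)) :
    ¬ IrreducibleC f :=
  not_irreducible_general X Y hX hY f t ht h₁ h₂ h₃ h₄

end ARShapes
end

section
/- Let f : X → Y and g : X' → Y' be chain maps in C_I(P) between minimal projective complexes such that f and g are isomorphic in the homotopy category K_I(P), i.e., there exist isomorphisms φ : X → X' and ψ : Y → Y' in K_I(P) with ψ∘[f] = [g]∘φ. If f is smonic, then g is smonic. -/
/-!
Over a finite-dimensional algebra the Jacobson radical `J` is nilpotent, so an endomorphism that
differs from the identity by a map with image in `J • M` is invertible. Two homotopic chain maps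
between minimal complexes differ in each degree by `d h + h d`, whose image lies in the radical.
Hence a chain map that is split epi (split mono) in the homotopy category is so in each degree,
and a componentwise split mono stays one under homotopy. Lifting `φ` and `ψ` to chain maps `u`
and `w`, the map `u ≫ g` is homotopic to `f ≫ w`, so its components are split monos; since the
components of `u` are epi, so are those of `g`.
-/

open CategoryTheory CategoryTheory.Limits

namespace ARShapes

variable {Λ : Type} [Ring Λ]

/-- The quotient functor from minimal projective complexes to the homotopy category
`K_I(P)` (realized inside the homotopy category of all complexes, of which `K_I(P)` is a
full subcategory, so that isomorphisms between minimal projective complexes in `K_I(P)`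
are the same as in the ambient homotopy category). -/
noncomputable abbrev Q (Λ : Type) [Ring Λ] :
    Cplx Λ ⥤ HomotopyCategory (ModuleCat Λᵐᵒᵖ) (ComplexShape.up ℤ) :=
  HomotopyCategory.quotient (ModuleCat Λᵐᵒᵖ) (ComplexShape.up ℤ)

section Radical

variable {R : Type*} [Ring R]

def IsRadicalHom {M N : ModuleCat R} (φ : M ⟶ N) : Prop :=
  LinearMap.range φ.hom ≤ Ideal.jacobson (⊥ : Ideal R) • (⊤ : Submodule R N)

namespace IsRadicalHom

variable {M N P : ModuleCat R}

lemma zero : IsRadicalHom (0 : M ⟶ N) := by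
  simp [IsRadicalHom]

lemma add {φ ψ : M ⟶ N} (hφ : IsRadicalHom φ) (hψ : IsRadicalHom ψ) :
    IsRadicalHom (φ + ψ) :=
  (LinearMap.range_add_le φ.hom ψ.hom).trans (sup_le hφ hψ)

lemma neg {φ : M ⟶ N} (hφ : IsRadicalHom φ) : IsRadicalHom (-φ) := by
  simpa [IsRadicalHom] using hφ

lemma comp_left (ψ : P ⟶ M) {φ : M ⟶ N} (hφ : IsRadicalHom φ) : IsRadicalHom (ψ ≫ φ) :=
  (LinearMap.range_comp_le_range ψ.hom φ.hom).trans hφ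

lemma comp_right {φ : M ⟶ N} (hφ : IsRadicalHom φ) (ψ : N ⟶ P) : IsRadicalHom (φ ≫ ψ) :=
  calc LinearMap.range (φ ≫ ψ).hom = (LinearMap.range φ.hom).map ψ.hom :=
        LinearMap.range_comp φ.hom ψ.hom
    _ ≤ Ideal.jacobson (⊥ : Ideal R) • (⊤ : Submodule R N).map ψ.hom := by
        rw [← Submodule.map_smul'']; exact Submodule.map_mono hφ
    _ ≤ Ideal.jacobson (⊥ : Ideal R) • ⊤ := Submodule.smul_mono le_rfl le_top

end IsRadicalHom

lemma _root_.LinearMap.isNilpotent_of_range_le_smul_top {M : Type*} [AddCommGroup M] [Module R M]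
    {I : Ideal R} (hI : IsNilpotent I) {D : Module.End R M}
    (hD : LinearMap.range D ≤ I • ⊤) : IsNilpotent D := by
  obtain ⟨n, hn⟩ := hI
  have hpow : ∀ m : ℕ, LinearMap.range (D ^ m) ≤ I ^ m • ⊤ := by
    intro m
    induction m with
    | zero => simp [Submodule.pow_zero]
    | succ m ih =>
      calc LinearMap.range (D ^ (m + 1)) = (LinearMap.range (D ^ m)).map D := by
            rw [pow_succ', Module.End.mul_eq_comp, LinearMap.range_comp]
        _ ≤ (I ^ m • ⊤ : Submodule R M).map D := Submodule.map_mono ih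
        _ = I ^ m • LinearMap.range D := by rw [Submodule.map_smul'', Submodule.map_top]
        _ ≤ I ^ m • (I • ⊤) := Submodule.smul_mono le_rfl hD
        _ = I ^ (m + 1) • ⊤ := by rw [Submodule.pow_succ, Submodule.mul_smul]
  refine ⟨n, LinearMap.range_eq_bot.mp (le_bot_iff.mp ?_)⟩
  simpa [hn] using hpow n

variable [IsSemiprimaryRing R]

lemma isIso_of_isRadicalHom_sub_id {M : ModuleCat R} {e : M ⟶ M}
    (he : IsRadicalHom (e - 𝟙 M)) : IsIso e := by
  have hnil : IsNilpotent (1 - e.hom) := by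
    refine LinearMap.isNilpotent_of_range_le_smul_top
      (Ideal.jacobson_bot (R := R) ▸ IsSemiprimaryRing.isNilpotent) ?_
    simpa [IsRadicalHom, Module.End.one_eq_id] using he.neg
  have hunit : IsUnit (ModuleCat.endRingEquiv M e) := by
    simpa using hnil.isUnit_one_sub
  exact (isUnit_iff_isIso (e : End M)).mp <| by
    simpa only [RingEquiv.symm_apply_apply] using hunit.map (ModuleCat.endRingEquiv M).symm

lemma isSplitMono_of_isRadicalHom_sub {M N : ModuleCat R} {a m : M ⟶ N} [IsSplitMono m]
    (h : IsRadicalHom (a - m)) : IsSplitMono a := by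
  have : IsIso (a ≫ retraction m) := isIso_of_isRadicalHom_sub_id <| by
    simpa [Preadditive.sub_comp] using h.comp_right (retraction m)
  exact ⟨⟨⟨retraction m ≫ inv (a ≫ retraction m), by
    rw [← Category.assoc, IsIso.hom_inv_id]⟩⟩⟩

end Radical

lemma _root_.IsSplitMono.of_comp_of_epi {C : Type*} [Category C] {X Y Z : C} (e : X ⟶ Y) [Epi e]
    (g : Y ⟶ Z) [IsSplitMono (e ≫ g)] : IsSplitMono g :=
  ⟨⟨⟨retraction (e ≫ g) ≫ e, by
    rw [← cancel_epi e, ← Category.assoc, ← Category.assoc, IsSplitMono.id, Category.id_comp,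
      Category.comp_id]⟩⟩⟩

section Complexes

variable {R : Type*} [Ring R] {ι : Type*} {c : ComplexShape ι}
  {C D : HomologicalComplex (ModuleCat R) c}

lemma _root_.Homotopy.isRadicalHom_sub (hC : ∀ i j, IsRadicalHom (C.d i j))
    (hD : ∀ i j, IsRadicalHom (D.d i j)) {p q : C ⟶ D} (H : Homotopy p q) (i : ι) :
    IsRadicalHom (p.f i - q.f i) := by
  rw [sub_eq_iff_eq_add.mpr (H.comm i)]
  exact ((hC _ _).comp_right _).add ((hD _ _).comp_left _)

variable [IsSemiprimaryRing R]

lemma isIso_f_of_homotopy_id (hC : ∀ i j, IsRadicalHom (C.d i j)) {e : C ⟶ C}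
    (H : Homotopy e (𝟙 C)) (i : ι) : IsIso (e.f i) :=
  isIso_of_isRadicalHom_sub_id (by simpa using H.isRadicalHom_sub hC hC i)

lemma isSplitEpi_f_of_isSplitEpi_map (hD : ∀ i j, IsRadicalHom (D.d i j)) {u : C ⟶ D}
    (hu : IsSplitEpi ((HomotopyCategory.quotient (ModuleCat R) c).map u)) (i : ι) :
    IsSplitEpi (u.f i) := by
  obtain ⟨v, hv⟩ := (HomotopyCategory.quotient (ModuleCat R) c).map_surjective
    (section_ ((HomotopyCategory.quotient (ModuleCat R) c).map u))
  have H : Homotopy (v ≫ u) (𝟙 D) := HomotopyCategory.homotopyOfEq _ _ (by simp [hv])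
  have := isIso_f_of_homotopy_id hD H i
  exact ⟨⟨⟨inv ((v ≫ u).f i) ≫ v.f i, by simp⟩⟩⟩

lemma isSplitMono_f_of_isSplitMono_map (hC : ∀ i j, IsRadicalHom (C.d i j)) {w : C ⟶ D}
    (hw : IsSplitMono ((HomotopyCategory.quotient (ModuleCat R) c).map w)) (i : ι) :
    IsSplitMono (w.f i) := by
  obtain ⟨v, hv⟩ := (HomotopyCategory.quotient (ModuleCat R) c).map_surjective
    (retraction ((HomotopyCategory.quotient (ModuleCat R) c).map w))
  have H : Homotopy (w ≫ v) (𝟙 C) := HomotopyCategory.homotopyOfEq _ _ (by simp [hv])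
  have := isIso_f_of_homotopy_id hC H i
  exact ⟨⟨⟨v.f i ≫ inv ((w ≫ v).f i), by
    rw [← Category.assoc, ← HomologicalComplex.comp_f, IsIso.hom_inv_id]⟩⟩⟩

lemma isSplitMono_f_of_homotopy (hC : ∀ i j, IsRadicalHom (C.d i j))
    (hD : ∀ i j, IsRadicalHom (D.d i j)) {p q : C ⟶ D} (H : Homotopy p q) (i : ι)
    [IsSplitMono (q.f i)] : IsSplitMono (p.f i) :=
  isSplitMono_of_isRadicalHom_sub (H.isRadicalHom_sub hC hD i)

end Complexes

lemma IsMinimalProjective.isRadicalHom_d {X : Cplx Λ}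
    (hX : IsMinimalProjective X) (i j : ℤ) : IsRadicalHom (X.d i j) := by
  by_cases h : i + 1 = j
  · subst h
    exact hX.2.2 i
  · rw [X.shape i j h]
    exact IsRadicalHom.zero

/-- If chain maps `f` and `g` between minimal projective complexes are isomorphic in the homotopy category `K_I(P)` and `f` is smonic, then `g` is smonic. -/
theorem smonic_of_iso
    {k Λ : Type} [Field k] [Ring Λ] [Algebra k Λ] [FiniteDimensional k Λ]
    (X Y X' Y' : Cplx Λ)
    (hX : IsMinimalProjective X) (hY : IsMinimalProjective Y)
    (hX' : IsMinimalProjective X') (hY' : IsMinimalProjective Y')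
    (f : X ⟶ Y) (g : X' ⟶ Y')
    (φ : (Q Λ).obj X ≅ (Q Λ).obj X') (ψ : (Q Λ).obj Y ≅ (Q Λ).obj Y')
    (hcomm : (Q Λ).map f ≫ ψ.hom = φ.hom ≫ (Q Λ).map g)
    (hf : Smonic f) :
    Smonic g := by
  have : Module.Finite k Λᵐᵒᵖ := Module.Finite.equiv (MulOpposite.opLinearEquiv k)
  have : IsArtinianRing Λᵐᵒᵖ := isArtinian_of_tower k inferInstance
  obtain ⟨u, hu⟩ := (Q Λ).map_surjective φ.hom
  obtain ⟨w, hw⟩ := (Q Λ).map_surjective ψ.hom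
  have H : Homotopy (u ≫ g) (f ≫ w) :=
    HomotopyCategory.homotopyOfEq _ _ (by simp [hu, hw, hcomm])
  intro i
  have : IsSplitEpi (u.f i) :=
    isSplitEpi_f_of_isSplitEpi_map hX'.isRadicalHom_d (u := u) (by rw [hu]; infer_instance) i
  have : IsSplitMono (w.f i) :=
    isSplitMono_f_of_isSplitMono_map hY.isRadicalHom_d (w := w) (by rw [hw]; infer_instance) i
  have : IsSplitMono (f.f i) := hf i
  have : IsSplitMono ((f ≫ w).f i) := by rw [HomologicalComplex.comp_f]; infer_instance
  have : IsSplitMono (u.f i ≫ g.f i) := by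
    simpa using isSplitMono_f_of_homotopy hX.isRadicalHom_d hY'.isRadicalHom_d H i
  exact IsSplitMono.of_comp_of_epi (u.f i) (g.f i)

end ARShapes
end

section
/- Let X →u Y →v Z →w X[1] be an Auslander–Reiten triangle in K_I(P), where u and v denote chain-map representatives in C_I(P). If u is smonic, then v is sepic. -/
/-! Statement 10: Theorem 1(a) of the paper. -/

open CategoryTheory CategoryTheory.Limits CategoryTheory.Pretriangulated

namespace ARShapes

variable {Λ : Type} [Ring Λ]

/-- An object of a preadditive category is indecomposable if it is nonzero and, whenever it is
exhibited as a biproduct of two objects (via inclusions and projections satisfying the biproduct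
identities), one of the two summands is zero. -/
def Indecomposable {K : Type*} [Category K] [Preadditive K] (Z : K) : Prop :=
  ¬ IsZero Z ∧ ∀ (A B : K) (i : A ⟶ Z) (j : B ⟶ Z) (p : Z ⟶ A) (q : Z ⟶ B),
    i ≫ p = 𝟙 A → j ≫ q = 𝟙 B → i ≫ q = 0 → j ≫ p = 0 → p ≫ i + q ≫ j = 𝟙 Z →
    IsZero A ∨ IsZero B

/-- `X →u Y →v Z →w X[1]` is an Auslander-Reiten triangle in `K_I(P)`: it is a distinguished
triangle, the end terms `X` and `Z` are indecomposable, the connecting morphism `w` is nonzero,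
and every morphism `W → Z` from an object of `K_I(P)` that is not a split epimorphism factors
through `v`. -/
def IsARTriangle {X Y Z : Cplx Λ} (u : X ⟶ Y) (v : Y ⟶ Z)
    (w : (Q Λ).obj Z ⟶ ((Q Λ).obj X)⟦(1 : ℤ)⟧) : Prop :=
  (Triangle.mk ((Q Λ).map u) ((Q Λ).map v) w ∈
    distTriang (HomotopyCategory (ModuleCat Λᵐᵒᵖ) (ComplexShape.up ℤ))) ∧
  Indecomposable ((Q Λ).obj X) ∧ Indecomposable ((Q Λ).obj Z) ∧ w ≠ 0 ∧
  ∀ (W : Cplx Λ), IsMinimalProjective W →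
    ∀ (φ : (Q Λ).obj W ⟶ (Q Λ).obj Z), ¬ IsSplitEpi φ →
      ∃ ψ : (Q Λ).obj W ⟶ (Q Λ).obj Y, ψ ≫ (Q Λ).map v = φ

end ARShapes

/-!
As `u` is degreewise split mono, `X → Y → coker u` is degreewise split exact, so it gives a
distinguished triangle in the homotopy category; comparing it with the given one, `v` becomes,
up to homotopy, the projection `Y → coker u` followed by a homotopy equivalence `coker u → Z`.
Homotopic maps between complexes whose differentials land in the radical agree modulo the
radical, so each `v^i` is surjective modulo `rad Z^i`, hence surjective by Nakayama's lemma, and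
it splits because `Z^i` is projective.
-/

theorem Submodule.eq_top_of_sup_jacobson_smul_eq_top {R M : Type*} [Ring R] [AddCommGroup M]
    [Module R M] [Module.Finite R M] {N : Submodule R M}
    (h : N ⊔ Ideal.jacobson (⊥ : Ideal R) • ⊤ = ⊤) : N = ⊤ := by
  have hquot := (map_mkQ_eq_top _ _).mpr h
  rw [map_smul'', map_top, range_mkQ, Ideal.jacobson_bot] at hquot
  have hbot := FG.eq_bot_of_le_jacobson_smul Module.Finite.fg_top hquot.ge
  exact Quotient.subsingleton_iff.mp
    ((subsingleton_iff R).mp (subsingleton_of_bot_eq_top hbot.symm))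

theorem LinearMap.surjective_of_sub_mem_jacobson_smul {R M N : Type*} [Ring R] [AddCommGroup M]
    [Module R M] [AddCommGroup N] [Module R N] [Module.Finite R N] {f g : M →ₗ[R] N}
    (hfg : ∀ x, f x - g x ∈ Ideal.jacobson (⊥ : Ideal R) • (⊤ : Submodule R N))
    (hg : Function.Surjective g) : Function.Surjective f := by
  refine range_eq_top.mp (Submodule.eq_top_of_sup_jacobson_smul_eq_top ?_)
  refine eq_top_iff.mpr fun y _ ↦ ?_
  obtain ⟨x, rfl⟩ := hg y
  rw [show g x = f x - (f x - g x) by abel]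
  exact sub_mem (Submodule.mem_sup_left ⟨x, rfl⟩) (Submodule.mem_sup_right (hfg x))

theorem ModuleCat.isSplitEpi_of_surjective {R : Type*} [Ring R] {M N : ModuleCat R}
    [Module.Projective R N] (f : M ⟶ N) (hf : Function.Surjective f) : IsSplitEpi f :=
  have : Epi f := (epi_iff_surjective f).mpr hf
  ⟨⟨Projective.factorThru (𝟙 N) f, Projective.factorThru_comp _ _⟩⟩

def CochainComplex.HasRadicalDifferentials {R : Type*} [Ring R]
    (X : CochainComplex (ModuleCat R) ℤ) : Prop :=
  ∀ i, LinearMap.range (X.d i (i + 1)).hom ≤ Ideal.jacobson (⊥ : Ideal R) • ⊤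

namespace Homotopy

variable {R : Type*} [Ring R] {A B : CochainComplex (ModuleCat R) ℤ} {f g : A ⟶ B}

theorem sub_mem_jacobson_smul (H : Homotopy f g) (hA : A.HasRadicalDifferentials)
    (hB : B.HasRadicalDifferentials) (i : ℤ) (x : A.X i) :
    f.f i x - g.f i x ∈ Ideal.jacobson (⊥ : Ideal R) • (⊤ : Submodule R (B.X i)) := by
  obtain ⟨j, rfl⟩ : ∃ j, i = j + 1 := ⟨i - 1, by omega⟩
  have hcomm := congr($(H.comm (j + 1)) x)
  rw [dNext_eq H.hom (i' := j + 1 + 1) rfl, prevD_eq H.hom (j' := j) rfl] at hcomm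
  simp only [ModuleCat.hom_add, LinearMap.add_apply, ModuleCat.hom_comp,
    LinearMap.comp_apply] at hcomm
  rw [hcomm, add_sub_cancel_right]
  exact add_mem (Submodule.smul_top_le_comap_smul_top _ _ (hA (j + 1) ⟨x, rfl⟩))
    (hB j ⟨_, rfl⟩)

theorem surjective_f_iff (H : Homotopy f g) (hA : A.HasRadicalDifferentials)
    (hB : B.HasRadicalDifferentials) (i : ℤ) [Module.Finite R (B.X i)] :
    Function.Surjective (f.f i) ↔ Function.Surjective (g.f i) :=
  ⟨LinearMap.surjective_of_sub_mem_jacobson_smul (H.symm.sub_mem_jacobson_smul hA hB i),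
    LinearMap.surjective_of_sub_mem_jacobson_smul (H.sub_mem_jacobson_smul hA hB i)⟩

end Homotopy

namespace CochainComplex

variable {C : Type*} [Category* C] [Abelian C]

noncomputable def cokernelSequenceSplitting {X Y : CochainComplex C ℤ} (u : X ⟶ Y)
    (hu : ∀ n, IsSplitMono (u.f n)) (n : ℤ) :
    ((ShortComplex.mk u (cokernel.π u) (cokernel.condition u)).map
      (HomologicalComplex.eval C _ n)).Splitting := by
  let s := (hu n).exists_splitMono.some
  have hexact := ((ShortComplex.mk u (cokernel.π u) (cokernel.condition u)).exact_of_g_is_cokernel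
    (cokernelIsCokernel u)).map (HomologicalComplex.eval C _ n)
  exact ShortComplex.Splitting.ofExactOfRetraction _ hexact s.retraction s.id
    (Functor.map_epi (HomologicalComplex.eval C _ n) (cokernel.π u))

theorem exists_iso_cokernel_of_distinguished {X Y Z : CochainComplex C ℤ} {u : X ⟶ Y} {v : Y ⟶ Z}
    {w : (HomotopyCategory.quotient C _).obj Z ⟶ ((HomotopyCategory.quotient C _).obj X)⟦(1 : ℤ)⟧}
    (hT : Triangle.mk ((HomotopyCategory.quotient C _).map u)
      ((HomotopyCategory.quotient C _).map v) w ∈ distTriang _)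
    (hu : ∀ n, IsSplitMono (u.f n)) :
    ∃ e : (HomotopyCategory.quotient C _).obj (cokernel u) ≅ (HomotopyCategory.quotient C _).obj Z,
      (HomotopyCategory.quotient C _).map (cokernel.π u) ≫ e.hom =
        (HomotopyCategory.quotient C _).map v := by
  have hsplit := (HomotopyCategory.distinguished_iff_iso_trianglehOfDegreewiseSplit _).mpr
    ⟨_, cokernelSequenceSplitting u hu, ⟨Iso.refl _⟩⟩
  obtain ⟨e, -, he₂⟩ := exists_iso_of_arrow_iso _ _ hsplit hT (Iso.refl _)
  refine ⟨Triangle.π₃.mapIso e, ?_⟩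
  have hcomm := e.hom.comm₂
  rw [he₂] at hcomm
  exact hcomm.trans (Category.id_comp _)

end CochainComplex

namespace ARShapes

theorem sepic_of_AR_smonic_general
    {Λ : Type} [Ring Λ]
    (X Y Z : Cplx Λ)
    (hY : IsMinimalProjective Y) (hZ : IsMinimalProjective Z)
    (u : X ⟶ Y) (v : Y ⟶ Z) (w : (Q Λ).obj Z ⟶ ((Q Λ).obj X)⟦(1 : ℤ)⟧)
    (hAR : IsARTriangle u v w) (hu : Smonic u) :
    Sepic v := by
  obtain ⟨e, he⟩ := CochainComplex.exists_iso_cokernel_of_distinguished hAR.1 hu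
  obtain ⟨g, hg⟩ := (Q Λ).map_surjective e.hom
  obtain ⟨f, hf⟩ := (Q Λ).map_surjective e.inv
  have hfg : Homotopy (f ≫ g) (𝟙 Z) :=
    HomotopyCategory.homotopyOfEq _ _ (by simp [hf, hg])
  have hv : Homotopy (cokernel.π u ≫ g) v :=
    HomotopyCategory.homotopyOfEq _ _ (by rw [Functor.map_comp, hg, he])
  intro i
  have := hZ.1 i
  have := hZ.2.1 i
  have hfg_surj : Function.Surjective ((f ≫ g).f i) :=
    (hfg.surjective_f_iff hZ.2.2 hZ.2.2 i).mpr fun z ↦ ⟨z, rfl⟩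
  have hπ_surj : Function.Surjective ((cokernel.π u).f i) :=
    (ModuleCat.epi_iff_surjective _).mp (Functor.map_epi (HomologicalComplex.eval _ _ i) _)
  have hg_surj : Function.Surjective (g.f i) := .of_comp (g := f.f i) hfg_surj
  refine ModuleCat.isSplitEpi_of_surjective _ ((hv.surjective_f_iff hY.2.2 hZ.2.2 i).mp ?_)
  exact (hg_surj.comp hπ_surj :)

/-- In an Auslander-Reiten triangle `X →u Y →v Z →w X[1]` in `K_I(P)`,
if `u` is smonic then `v` is sepic. -/
theorem sepic_of_AR_smonic
    {k Λ : Type} [Field k] [Ring Λ] [Algebra k Λ] [FiniteDimensional k Λ]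
    (X Y Z : Cplx Λ)
    (hX : IsMinimalProjective X) (hY : IsMinimalProjective Y) (hZ : IsMinimalProjective Z)
    (u : X ⟶ Y) (v : Y ⟶ Z) (w : (Q Λ).obj Z ⟶ ((Q Λ).obj X)⟦(1 : ℤ)⟧)
    (hAR : IsARTriangle u v w) (hu : Smonic u) :
    Sepic v :=
  sepic_of_AR_smonic_general X Y Z hY hZ u v w hAR hu

end ARShapes
end
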